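/- The sum over k >= 1 of C_k^{(3)} equals 1/2, where C_k^{(3)} = 2^{-k} * integral from 0 to infinity of Gamma(-1/2,x)^k / [x^{-1/2} e^{-x} + gamma(1/2,x)]^k dx. -/

import Mathlib

open Set MeasureTheory

/-- Upper incomplete gamma function. -/
noncomputable def Gup (ν x : ℝ) : ℝ := ∫ t in Ioi x, Real.exp (-t) * t ^ (ν - 1)

/-- Lower incomplete gamma function. -/
noncomputable def glow (ν x : ℝ) : ℝ := ∫ t in Ioc (0 : ℝ) x, Real.exp (-t) * t ^ (ν - 1)

noncomputable def C3 (k : ℕ) : ℝ :=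
  (1 / 2 ^ k) * ∫ x in Ioi (0 : ℝ),
    (Gup (-(1 / 2)) x / (x ^ (-(1 / 2) : ℝ) * Real.exp (-x) + glow (1 / 2) x)) ^ k

/-!
Write `G = Gup (-1/2)`. Integrating by parts gives `Γ(1/2, x) = x^(-1/2) e^(-x) - G x / 2`, and
`γ(1/2, x) + Γ(1/2, x) = √π`, so the denominator equals `√π + G x / 2` and the `k`-th term is
`∫ q^k` with `q = G / (G + 2√π) ∈ [0, 1)`. The geometric series sums to `G / (2√π)` pointwise,
and may be integrated termwise since all terms are nonnegative. Finally `∫₀^∞ Γ(ν, x) dx = Γ(ν + 1)`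
by the layer cake formula for the measure `e^(-t) t^(ν-1) dt`, so `∫ G = Γ(1/2) = √π`.
-/

open Real Filter

theorem integrableOn_Ioi_exp_neg_mul_rpow (ν : ℝ) {x : ℝ} (hx : 0 < x) :
    IntegrableOn (fun t : ℝ => exp (-t) * t ^ (ν - 1)) (Ioi x) :=
  integrable_of_isBigO_exp_neg one_half_pos
    (continuousOn_id.neg.rexp.mul
      (continuousOn_id.rpow_const fun _ ht => Or.inl (hx.trans_le ht).ne'))
    (Gamma_integrand_isLittleO _).isBigO

theorem Gup_nonneg (ν : ℝ) {x : ℝ} (hx : 0 ≤ x) : 0 ≤ Gup ν x :=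
  setIntegral_nonneg measurableSet_Ioi fun _ ht =>
    mul_nonneg (exp_pos _).le (rpow_nonneg (hx.trans_lt ht).le _)

theorem glow_add_Gup {ν x : ℝ} (hν : 0 < ν) (hx : 0 ≤ x) : glow ν x + Gup ν x = Gamma ν := by
  rw [Gamma_eq_integral hν, glow, Gup, ← Ioc_union_Ioi_eq_Ioi hx,
    setIntegral_union (Ioc_disjoint_Ioi le_rfl) measurableSet_Ioi
      ((GammaIntegral_convergent hν).mono_set Ioc_subset_Ioi_self)
      ((GammaIntegral_convergent hν).mono_set (Ioi_subset_Ioi hx))]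

theorem Gup_add_one (ν : ℝ) {x : ℝ} (hx : 0 < x) :
    Gup (ν + 1) x = ν * Gup ν x + x ^ ν * exp (-x) := by
  have hderiv : ∀ t ∈ Ici x, HasDerivAt (fun t => -(t ^ ν * exp (-t)))
      (exp (-t) * t ^ (ν + 1 - 1) - ν * (exp (-t) * t ^ (ν - 1))) t := by
    intro t ht
    refine ((hasDerivAt_rpow_const (p := ν) (Or.inl (hx.trans_le ht).ne')).mul
      (hasDerivAt_neg t).exp).neg.congr_deriv ?_
    rw [add_sub_cancel_right]
    ring
  have hlim : Tendsto (fun t => -(t ^ ν * exp (-t))) atTop (nhds 0) := by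
    simpa using (tendsto_rpow_mul_exp_neg_mul_atTop_nhds_zero ν 1 one_pos).neg
  have hint := integrableOn_Ioi_exp_neg_mul_rpow (ν + 1) hx
  have hint' := (integrableOn_Ioi_exp_neg_mul_rpow ν hx).const_mul ν
  have hFTC := integral_Ioi_of_hasDerivAt_of_tendsto' hderiv (hint.sub hint') hlim
  rw [integral_sub hint hint', integral_const_mul] at hFTC
  rw [Gup, Gup]
  linarith

-- Infinite for `ν ≤ 0`, so Mathlib's normalised `gammaMeasure` does not apply.
noncomputable def gammaWeightMeasure (ν : ℝ) : Measure ℝ :=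
  (volume.restrict (Ioi 0)).withDensity fun t => ENNReal.ofReal (exp (-t) * t ^ (ν - 1))

theorem gammaWeightMeasure_Ioi (ν : ℝ) {s : ℝ} (hs : 0 < s) :
    gammaWeightMeasure ν (Ioi s) = ENNReal.ofReal (Gup ν s) := by
  rw [gammaWeightMeasure, withDensity_apply _ measurableSet_Ioi,
    Measure.restrict_restrict measurableSet_Ioi, inter_eq_left.2 (Ioi_subset_Ioi hs.le), Gup,
    ofReal_integral_eq_lintegral_ofReal (integrableOn_Ioi_exp_neg_mul_rpow ν hs)]
  filter_upwards [ae_restrict_mem measurableSet_Ioi] with t ht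
  exact mul_nonneg (exp_pos _).le (rpow_nonneg (hs.trans ht).le _)

theorem setLIntegral_gammaWeightMeasure_Ioi {ν : ℝ} (hν : -1 < ν) :
    ∫⁻ s in Ioi 0, gammaWeightMeasure ν (Ioi s) = ENNReal.ofReal (Gamma (ν + 1)) := by
  have hpos : ∀ᵐ t ∂gammaWeightMeasure ν, 0 ≤ t :=
    (withDensity_absolutelyContinuous _ _).ae_le <| by
      filter_upwards [ae_restrict_mem measurableSet_Ioi] with t ht using ht.le
  have hmeas : Measurable fun t : ℝ => ENNReal.ofReal (exp (-t) * t ^ (ν - 1)) := by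
    fun_prop
  calc ∫⁻ s in Ioi 0, gammaWeightMeasure ν (Ioi s)
      = ∫⁻ t, ENNReal.ofReal t ∂gammaWeightMeasure ν :=
        (lintegral_eq_lintegral_meas_lt _ hpos measurable_id.aemeasurable).symm
    _ = ∫⁻ t in Ioi 0, ENNReal.ofReal (exp (-t) * t ^ (ν + 1 - 1)) := by
        rw [gammaWeightMeasure,
          lintegral_withDensity_eq_lintegral_mul _ hmeas ENNReal.measurable_ofReal]
        refine setLIntegral_congr_fun measurableSet_Ioi fun t ht => ?_
        rw [Pi.mul_apply, ← ENNReal.ofReal_mul (mul_nonneg (exp_pos _).le (rpow_nonneg ht.le _)),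
          add_sub_cancel_right, rpow_sub_one ht.ne', mul_assoc, div_mul_cancel₀ _ ht.ne']
    _ = ENNReal.ofReal (Gamma (ν + 1)) := by
        rw [Gamma_eq_integral (by linarith), ofReal_integral_eq_lintegral_ofReal
          (GammaIntegral_convergent (by linarith))]
        filter_upwards [ae_restrict_mem measurableSet_Ioi] with t ht
        exact mul_nonneg (exp_pos _).le (rpow_nonneg (le_of_lt ht) _)

theorem Gup_ae_eq_gammaWeightMeasure_Ioi (ν : ℝ) :
    Gup ν =ᵐ[volume.restrict (Ioi 0)] fun s => (gammaWeightMeasure ν (Ioi s)).toReal := by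
  filter_upwards [ae_restrict_mem measurableSet_Ioi] with s hs
  rw [gammaWeightMeasure_Ioi ν hs, ENNReal.toReal_ofReal (Gup_nonneg ν (le_of_lt hs))]

theorem measurable_gammaWeightMeasure_Ioi (ν : ℝ) :
    Measurable fun s => gammaWeightMeasure ν (Ioi s) :=
  Antitone.measurable fun _ _ h => measure_mono (Ioi_subset_Ioi h)

theorem integrableOn_Gup {ν : ℝ} (hν : -1 < ν) : IntegrableOn (Gup ν) (Ioi 0) :=
  (integrable_toReal_of_lintegral_ne_top (measurable_gammaWeightMeasure_Ioi ν).aemeasurable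
    (by rw [setLIntegral_gammaWeightMeasure_Ioi hν]; exact ENNReal.ofReal_ne_top)).congr
    (Gup_ae_eq_gammaWeightMeasure_Ioi ν).symm

theorem integral_Gup {ν : ℝ} (hν : -1 < ν) : ∫ s in Ioi 0, Gup ν s = Gamma (ν + 1) := by
  rw [integral_congr_ae (Gup_ae_eq_gammaWeightMeasure_Ioi ν),
    integral_toReal (measurable_gammaWeightMeasure_Ioi ν).aemeasurable ?_,
    setLIntegral_gammaWeightMeasure_Ioi hν,
    ENNReal.toReal_ofReal (Gamma_pos_of_pos (by linarith)).le]
  filter_upwards [ae_restrict_mem measurableSet_Ioi] with s hs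
  rw [gammaWeightMeasure_Ioi ν hs]
  exact ENNReal.ofReal_lt_top

theorem hasSum_div_add_pow_succ {x c : ℝ} (hx : 0 ≤ x) (hc : 0 < c) :
    HasSum (fun n : ℕ => (x / (x + c)) ^ (n + 1)) (x / c) := by
  have hxc : 0 < x + c := by linarith
  have hr : x / (x + c) < 1 := (div_lt_one hxc).2 (by linarith)
  have hsum : x / (x + c) * (1 - x / (x + c))⁻¹ = x / c := by
    rw [one_sub_div hxc.ne', add_sub_cancel_left]
    field_simp
  rw [← hsum]
  simpa only [pow_succ'] using
    (hasSum_geometric_of_lt_one (div_nonneg hx hxc.le) hr).mul_left (x / (x + c))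

theorem hasSum_integral_div_add_pow_succ {α : Type*} [MeasurableSpace α] {μ : Measure α}
    {f : α → ℝ} (hf : Integrable f μ) (hf0 : 0 ≤ᵐ[μ] f) {c : ℝ} (hc : 0 < c) :
    HasSum (fun n : ℕ => ∫ a, (f a / (f a + c)) ^ (n + 1) ∂μ) ((∫ a, f a ∂μ) / c) := by
  have hsum : ∀ᵐ a ∂μ, HasSum (fun n : ℕ => (f a / (f a + c)) ^ (n + 1)) (f a / c) := by
    filter_upwards [hf0] with a ha using hasSum_div_add_pow_succ ha hc
  rw [← MeasureTheory.integral_div]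
  refine hasSum_integral_of_dominated_convergence (fun n a => (f a / (f a + c)) ^ (n + 1))
    (fun _ => ?_) (fun _ => ?_) (hsum.mono fun a ha => ha.summable) ?_ hsum
  · have := hf.aemeasurable
    exact (by fun_prop : AEMeasurable _ μ).aestronglyMeasurable
  · filter_upwards [hf0] with a (ha : 0 ≤ f a)
    exact (norm_of_nonneg (pow_nonneg (div_nonneg ha (by linarith)) _)).le
  · refine (hf.div_const c).congr ?_
    filter_upwards [hsum] with a ha using ha.tsum_eq.symm

theorem rpow_mul_exp_add_glow_one_half {x : ℝ} (hx : 0 < x) :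
    x ^ (-(1 / 2) : ℝ) * exp (-x) + glow (1 / 2) x = (Gup (-(1 / 2)) x + 2 * √π) / 2 := by
  have hrec := Gup_add_one (-(1 / 2)) hx
  have hsplit := glow_add_Gup one_half_pos hx.le
  rw [show -(1 / 2 : ℝ) + 1 = 1 / 2 by norm_num] at hrec
  rw [Gamma_one_half_eq] at hsplit
  linarith

theorem C3_succ_eq (k : ℕ) :
    C3 (k + 1) = ∫ x in Ioi 0, (Gup (-(1 / 2)) x / (Gup (-(1 / 2)) x + 2 * √π)) ^ (k + 1) := by
  rw [C3, ← integral_const_mul]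
  refine setIntegral_congr_fun measurableSet_Ioi fun x hx => ?_
  rw [rpow_mul_exp_add_glow_one_half hx, div_div_eq_mul_div, one_div, ← inv_pow, ← mul_pow]
  congr 1
  field_simp

theorem sum_C3 : ∑' k : ℕ, C3 (k + 1) = 1 / 2 := by
  have hG := hasSum_integral_div_add_pow_succ (integrableOn_Gup (ν := -(1 / 2)) (by norm_num))
    (ae_restrict_of_forall_mem measurableSet_Ioi fun _ hx => Gup_nonneg _ (le_of_lt hx))
    (by positivity : (0 : ℝ) < 2 * √π)
  rw [integral_Gup (by norm_num), show -(1 / 2 : ℝ) + 1 = 1 / 2 by norm_num, Gamma_one_half_eq]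
    at hG
  simp_rw [C3_succ_eq, hG.tsum_eq]
  field_simp
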